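/- (Proposition C.1, QR decomposition for quiver representations.) Let Q be a finite acyclic quiver without double edges, encoded by vertex set Fin n and edge set E ⊆ {(i,j) ∈ Fin n × Fin n : i < j}, and let d be a dimension vector. Let A = (A_{(i,j)} ∈ ℝ^{d_j × d_i})_{(i,j) ∈ E} be a representation of Q. Then there exist orthogonal matrices Q_i ∈ O(d_i) for each vertex i, with Q_i the identity whenever i is a source or a sink, and a representation R = (R_{(i,j)} ∈ ℝ^{d_j × d_i})_{(i,j) ∈ E} such that: (1) A_{(i,j)} = Q_j R_{(i,j)} Q_i⁻¹ for every edge (i,j) ∈ E; and (2) for every vertex i that is neither a source nor a sink, the matrix R_{→i} ∈ ℝ^{d_i × d_{→i}} obtained by horizontally concatenating the matrices R_{(j,i)} over incoming edges (j,i) ∈ E in increasing order of j is upper triangular (its (a,b) entry vanishes whenever a > b), where d_{→i} = Σ_{(j,i) ∈ E} d_j. -/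

import Mathlib

/-!
Treat the vertices in increasing order. Every edge `(j, i)` has `j < i`, so when vertex `i` is
reached the factors `Q_j` of all its in-neighbours are already fixed, and
`R_{→i} = Q_i⁻¹ [A_{(j,i)} Q_j]_j`. Taking for `Q_i` the orthogonal factor of a QR decomposition
of `[A_{(j,i)} Q_j]_j`, obtained by Gram–Schmidt on its columns, makes `R_{→i}` upper triangular;
sources and sinks get `Q_i = 1`.
-/

open Finset Function
open scoped Matrix

theorem WellFoundedLT.exists_pi_forall_of_forall_exists {α : Type*} [LT α] [WellFoundedLT α]
    {β : α → Type*}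
    (P : ∀ i, (∀ j, j < i → β j) → β i → Prop) (h : ∀ i f, ∃ b, P i f b) :
    ∃ g : ∀ i, β i, ∀ i, P i (fun j _ => g j) (g i) := by
  choose c hc using h
  refine ⟨WellFoundedLT.fix c, fun i => ?_⟩
  rw [WellFoundedLT.fix_eq]
  exact hc _ _

namespace Matrix

theorem exists_orthogonalGroup_blockTriangular_star_mul {ι : Type*} [Fintype ι]
    [LinearOrder ι] [LocallyFiniteOrderBot ι] (M : Matrix ι ι ℝ) :
    ∃ Q : orthogonalGroup ι ℝ, (star (Q : Matrix ι ι ℝ) * M).BlockTriangular id := by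
  have hdim : Module.finrank ℝ (EuclideanSpace ℝ ι) = Fintype.card ι := finrank_euclideanSpace
  let col : ι → EuclideanSpace ℝ ι := fun c => WithLp.toLp 2 (Mᵀ c)
  let b := InnerProductSpace.gramSchmidtOrthonormalBasis hdim col
  refine ⟨⟨_, (EuclideanSpace.basisFun ι ℝ).toMatrix_orthonormalBasis_mem_orthogonal b⟩,
    fun a c hca => ?_⟩
  rw [← InnerProductSpace.gramSchmidtOrthonormalBasis_inv_triangular hdim col hca]
  simp [mul_apply, PiLp.inner_apply, mul_comm, Module.Basis.toMatrix_apply, b, col]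

theorem exists_orthogonalGroup_star_mul_apply_eq_zero_of_lt {p : ℕ} {κ : Type*}
    (M : Matrix (Fin p) κ ℝ) {pos : κ → ℕ} (hpos : Injective pos) :
    ∃ Q : orthogonalGroup (Fin p) ℝ, ∀ (a : Fin p) b, pos b < a →
      (star (Q : Matrix (Fin p) (Fin p) ℝ) * M) a b = 0 := by
  rcases isEmpty_or_nonempty κ with _ | _
  · exact ⟨1, fun _ b => isEmptyElim b⟩
  -- Column `c` of the padded square matrix is column `invFun pos c` of `M`; the columns at
  -- positions outside the range of `pos` are arbitrary and play no role.
  obtain ⟨Q, hQ⟩ := exists_orthogonalGroup_blockTriangular_star_mul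
    (M.submatrix id fun c => invFun pos c)
  refine ⟨Q, fun a b hba => ?_⟩
  have := hQ (show (⟨pos b, hba.trans a.isLt⟩ : Fin p) < a from hba)
  change (star (Q : Matrix (Fin p) (Fin p) ℝ) * M) a (invFun pos (pos b)) = 0 at this
  rwa [leftInverse_invFun hpos b] at this

end Matrix

section BlockOffset

variable {ι : Type*} [Fintype ι] [LinearOrder ι] (s : ι → Prop) [DecidablePred s] (w : ι → ℕ)

def blockOffset (j : ι) : ℕ :=
  ∑ j' ∈ univ.filter (fun j' => j' < j ∧ s j'), w j'

variable {s} in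
theorem blockOffset_add_le {j₁ j₂ : ι} (hj₁ : s j₁) (h : j₁ < j₂) :
    blockOffset s w j₁ + w j₁ ≤ blockOffset s w j₂ := by
  rw [blockOffset, add_comm, ← sum_insert (by simp)]
  refine sum_le_sum_of_subset fun x hx => ?_
  simp only [mem_insert, mem_filter, mem_univ, true_and] at hx ⊢
  rcases hx with rfl | ⟨hx, hsx⟩
  exacts [⟨h, hj₁⟩, ⟨hx.trans h, hsx⟩]

theorem blockOffset_add_injective :
    Injective fun x : Σ j : {j // s j}, Fin (w j) => blockOffset s w x.1 + x.2 := by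
  rintro ⟨⟨j₁, hj₁⟩, c₁⟩ ⟨⟨j₂, hj₂⟩, c₂⟩ h
  rcases lt_trichotomy j₁ j₂ with hlt | rfl | hgt
  · have := blockOffset_add_le w hj₁ hlt; simp only at h; omega
  · simp only [add_right_inj, Fin.val_inj] at h
    rw [h]
  · have := blockOffset_add_le w hj₂ hgt; simp only at h; omega

theorem Matrix.exists_orthogonalGroup_star_mul_block_apply_eq_zero {p : ℕ}
    (B : ∀ j, Matrix (Fin p) (Fin (w j)) ℝ) :
    ∃ Q : Matrix.orthogonalGroup (Fin p) ℝ, ∀ j, s j → ∀ (a : Fin p) (c : Fin (w j)),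
      blockOffset s w j + c < a → (star (Q : Matrix (Fin p) (Fin p) ℝ) * B j) a c = 0 := by
  obtain ⟨Q, hQ⟩ := exists_orthogonalGroup_star_mul_apply_eq_zero_of_lt
    (fun a (x : Σ j : {j // s j}, Fin (w j)) => B x.1 a x.2) (blockOffset_add_injective s w)
  exact ⟨Q, fun j hj a c h => hQ a ⟨⟨j, hj⟩, c⟩ h⟩

end BlockOffset

theorem quiver_representation_QR_decomposition_general
    (n : ℕ) (Edges : Finset (Fin n × Fin n))
    (hE : ∀ p ∈ Edges, p.1 < p.2)
    (d : Fin n → ℕ)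
    (A : ∀ i j : Fin n, Matrix (Fin (d j)) (Fin (d i)) ℝ) :
    ∃ (Qm : ∀ i : Fin n, Matrix.orthogonalGroup (Fin (d i)) ℝ)
      (R : ∀ i j : Fin n, Matrix (Fin (d j)) (Fin (d i)) ℝ),
      (∀ i : Fin n, ((∀ j, (j, i) ∉ Edges) ∨ (∀ j, (i, j) ∉ Edges)) → Qm i = 1) ∧
      (∀ i j : Fin n, (i, j) ∈ Edges →
        A i j = (Qm j : Matrix (Fin (d j)) (Fin (d j)) ℝ) * R i j *
          (((Qm i)⁻¹ : Matrix.orthogonalGroup (Fin (d i)) ℝ) :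
            Matrix (Fin (d i)) (Fin (d i)) ℝ)) ∧
      (∀ i : Fin n, (∃ j, (j, i) ∈ Edges) → (∃ j, (i, j) ∈ Edges) →
        ∀ j : Fin n, (j, i) ∈ Edges →
          ∀ (a : Fin (d i)) (c : Fin (d j)),
            (∑ j' ∈ Finset.univ.filter (fun j' : Fin n => j' < j ∧ (j', i) ∈ Edges), d j')
                + (c : ℕ) < (a : ℕ) →
            R j i a c = 0) := by
  obtain ⟨Q, hQ⟩ := WellFoundedLT.exists_pi_forall_of_forall_exists
    (β := fun i => Matrix.orthogonalGroup (Fin (d i)) ℝ)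
    (fun i Qlt Qi => if (∀ j, (j, i) ∉ Edges) ∨ (∀ j, (i, j) ∉ Edges) then Qi = 1 else
      ∀ j (hj : (j, i) ∈ Edges) (a : Fin (d i)) (c : Fin (d j)),
        blockOffset (fun j' => (j', i) ∈ Edges) d j + c < a →
        (star (Qi : Matrix (Fin (d i)) (Fin (d i)) ℝ) *
          (A j i * (Qlt j (hE _ hj) : Matrix (Fin (d j)) (Fin (d j)) ℝ))) a c = 0)
    fun i Qlt => by
      split_ifs
      · exact ⟨1, rfl⟩
      · obtain ⟨Qi, hQi⟩ := Matrix.exists_orthogonalGroup_star_mul_block_apply_eq_zero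
          (fun j' => (j', i) ∈ Edges) d
          fun j => if h : j < i then A j i * (Qlt j h : Matrix (Fin (d j)) (Fin (d j)) ℝ) else 0
        exact ⟨Qi, fun j hj a c h => by simpa [dif_pos (hE _ hj)] using hQi j hj a c h⟩
  refine ⟨Q, fun i j => (((Q j)⁻¹ : Matrix.orthogonalGroup _ ℝ) : Matrix (Fin (d j)) (Fin (d j)) ℝ)
      * A i j * (Q i : Matrix (Fin (d i)) (Fin (d i)) ℝ), fun i hi => ?_, fun i j _ => ?_,
    fun i ⟨j₀, hj₀⟩ ⟨j₁, hj₁⟩ j hj a c h => ?_⟩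
  · simpa [if_pos hi] using hQ i
  · simp only [← Matrix.mul_assoc, ← Matrix.UnitaryGroup.mul_val]
    rw [mul_inv_cancel, Matrix.UnitaryGroup.one_val, Matrix.one_mul, Matrix.mul_assoc,
      ← Matrix.UnitaryGroup.mul_val, mul_inv_cancel, Matrix.UnitaryGroup.one_val, Matrix.mul_one]
  · have hQi := hQ i
    rw [if_neg (not_or.2 ⟨fun h => h j₀ hj₀, fun h => h j₁ hj₁⟩)] at hQi
    simpa [Matrix.mul_assoc] using hQi j hj a c h

/-- Proposition C.1: QR decomposition for quiver representations.
The quiver has vertex set `Fin n` and edge set `Edges ⊆ {(i,j) : i < j}` (hence it is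
acyclic with no double edges); a representation assigns a matrix
`A (i,j) ∈ ℝ^{d_j × d_i}` to each edge `(i,j)`. There exist orthogonal matrices `Qm i`,
equal to the identity at every source (no incoming edge) and sink (no outgoing edge),
and a representation `R` with `A_{(i,j)} = Qm_j * R_{(i,j)} * Qm_i⁻¹` on every edge, such
that for every vertex `i` that is neither a source nor a sink, the horizontal
concatenation `R_{→i}` of the `R_{(j,i)}` over incoming edges (in increasing order of `j`)
is upper triangular: its `(a, b)` entry vanishes whenever `a > b`. -/
theorem quiver_representation_QR_decomposition
    (n : ℕ) (Edges : Finset (Fin n × Fin n))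
    (hE : ∀ p ∈ Edges, p.1 < p.2)
    (d : Fin n → ℕ) (hd : ∀ i, 1 ≤ d i)
    (A : ∀ i j : Fin n, Matrix (Fin (d j)) (Fin (d i)) ℝ) :
    ∃ (Qm : ∀ i : Fin n, Matrix.orthogonalGroup (Fin (d i)) ℝ)
      (R : ∀ i j : Fin n, Matrix (Fin (d j)) (Fin (d i)) ℝ),
      (∀ i : Fin n, ((∀ j, (j, i) ∉ Edges) ∨ (∀ j, (i, j) ∉ Edges)) → Qm i = 1) ∧
      (∀ i j : Fin n, (i, j) ∈ Edges →
        A i j = (Qm j : Matrix (Fin (d j)) (Fin (d j)) ℝ) * R i j *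
          (((Qm i)⁻¹ : Matrix.orthogonalGroup (Fin (d i)) ℝ) :
            Matrix (Fin (d i)) (Fin (d i)) ℝ)) ∧
      (∀ i : Fin n, (∃ j, (j, i) ∈ Edges) → (∃ j, (i, j) ∈ Edges) →
        ∀ j : Fin n, (j, i) ∈ Edges →
          ∀ (a : Fin (d i)) (c : Fin (d j)),
            (∑ j' ∈ Finset.univ.filter (fun j' : Fin n => j' < j ∧ (j', i) ∈ Edges), d j')
                + (c : ℕ) < (a : ℕ) →
            R j i a c = 0) :=
  quiver_representation_QR_decomposition_general n Edges hE d A
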